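/- Let F(X) = A^T (Ω + H (Ψ + K X K^T)^{-1} H^T)^{-1} A with Ω, Ψ symmetric positive definite and A injective. For any positive definite X and α > 1, F(α^{-1}·X) ≻ α^{-1}·F(X). -/

import Mathlib

/-!
Write `S(X) = Ψ + K X Kᵀ` and `M(X) = Ω + H S(X)⁻¹ Hᵀ`, so that `F(X) = Aᵀ M(X)⁻¹ A`.
Matrix inversion reverses the Loewner order on positive definite matrices, strictly so for
strict inequalities. Since `S(α⁻¹ X) - α⁻¹ S(X) = (1 - α⁻¹) Ψ ⪰ 0`, inverting gives
`α S(X)⁻¹ ⪰ S(α⁻¹ X)⁻¹`, hence `α M(X) - M(α⁻¹ X) ⪰ (α - 1) Ω ≻ 0`. Inverting once more gives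
`M(α⁻¹ X)⁻¹ ≻ α⁻¹ M(X)⁻¹`, and conjugating by the injective `A` preserves strict positivity.
-/

open Matrix

namespace Matrix

variable {ι κ : Type*} [Fintype ι] [Fintype κ]

theorem PosDef.add_mul_mul_transpose {Ψ : Matrix ι ι ℝ} (hΨ : Ψ.PosDef) {X : Matrix κ κ ℝ}
    (hX : X.PosSemidef) (K : Matrix ι κ ℝ) : (Ψ + K * X * Kᵀ).PosDef :=
  hΨ.add_posSemidef (hX.mul_mul_conjTranspose_same K)

variable [DecidableEq ι]

theorem mulVec_nonsing_inv_mulVec {A : Matrix ι ι ℝ} (hA : IsUnit A) (v : ι → ℝ) :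
    A *ᵥ (A⁻¹ *ᵥ v) = v := by
  rw [mulVec_mulVec, mul_nonsing_inv _ ((isUnit_iff_isUnit_det A).mp hA), one_mulVec]

theorem inv_smul_of_ne_zero {A : Matrix ι ι ℝ} (hA : IsUnit A) {c : ℝ} (hc : c ≠ 0) :
    (c • A)⁻¹ = c⁻¹ • A⁻¹ :=
  inv_eq_left_inv (by simp [smul_smul, hc, nonsing_inv_mul _ ((isUnit_iff_isUnit_det A).mp hA)])

theorem dotProduct_inv_sub_inv_mulVec {A B : Matrix ι ι ℝ} (hA : IsUnit A) (hB : IsUnit B)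
    (hBs : B.IsSymm) (v : ι → ℝ) :
    v ⬝ᵥ (B⁻¹ - A⁻¹) *ᵥ v =
      (B⁻¹ *ᵥ v - A⁻¹ *ᵥ v) ⬝ᵥ B *ᵥ (B⁻¹ *ᵥ v - A⁻¹ *ᵥ v)
        + A⁻¹ *ᵥ v ⬝ᵥ (A - B) *ᵥ (A⁻¹ *ᵥ v) := by
  have hcross : B⁻¹ *ᵥ v ⬝ᵥ B *ᵥ (A⁻¹ *ᵥ v) = A⁻¹ *ᵥ v ⬝ᵥ v := by
    rw [dotProduct_mulVec, ← mulVec_transpose, hBs.eq, dotProduct_comm,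
      mulVec_nonsing_inv_mulVec hB]
  simp only [sub_mulVec, mulVec_sub, dotProduct_sub, sub_dotProduct,
    mulVec_nonsing_inv_mulVec hA, mulVec_nonsing_inv_mulVec hB, hcross, dotProduct_comm v]
  ring

theorem PosSemidef.inv_sub_inv {A B : Matrix ι ι ℝ} (hB : B.PosDef) (h : (A - B).PosSemidef) :
    (B⁻¹ - A⁻¹).PosSemidef := by
  have hA : A.PosDef := by simpa using hB.add_posSemidef h
  refine posSemidef_iff_dotProduct_mulVec.mpr
    ⟨hB.inv.isHermitian.sub hA.inv.isHermitian, fun v => ?_⟩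
  rw [star_trivial, dotProduct_inv_sub_inv_mulVec hA.isUnit hB.isUnit hB.isHermitian v]
  exact add_nonneg (by simpa only [star_trivial] using hB.posSemidef.dotProduct_mulVec_nonneg _)
    (by simpa only [star_trivial] using h.dotProduct_mulVec_nonneg _)

theorem PosDef.inv_sub_inv {A B : Matrix ι ι ℝ} (hB : B.PosDef) (h : (A - B).PosDef) :
    (B⁻¹ - A⁻¹).PosDef := by
  have hA : A.PosDef := by simpa using hB.add h
  refine posDef_iff_dotProduct_mulVec.mpr
    ⟨hB.inv.isHermitian.sub hA.inv.isHermitian, fun v hv => ?_⟩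
  have hw : A⁻¹ *ᵥ v ≠ 0 := fun h0 => hv <| by
    rw [← mulVec_nonsing_inv_mulVec hA.isUnit v, h0, mulVec_zero]
  rw [star_trivial, dotProduct_inv_sub_inv_mulVec hA.isUnit hB.isUnit hB.isHermitian v]
  exact add_pos_of_nonneg_of_pos
    (by simpa only [star_trivial] using hB.posSemidef.dotProduct_mulVec_nonneg _)
    (by simpa only [star_trivial] using h.dotProduct_mulVec_pos hw)

theorem PosDef.smul_inv_sub_inv_add_mul_smul_mul_transpose {Ψ : Matrix ι ι ℝ} (hΨ : Ψ.PosDef)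
    {X : Matrix κ κ ℝ} (hX : X.PosSemidef) (K : Matrix ι κ ℝ) {α : ℝ} (hα : 1 ≤ α) :
    (α • (Ψ + K * X * Kᵀ)⁻¹ - (Ψ + K * (α⁻¹ • X) * Kᵀ)⁻¹).PosSemidef := by
  have hα₀ : 0 < α := one_pos.trans_le hα
  have hS : (Ψ + K * X * Kᵀ).PosDef := hΨ.add_mul_mul_transpose hX K
  have hgap : Ψ + K * (α⁻¹ • X) * Kᵀ - α⁻¹ • (Ψ + K * X * Kᵀ) = (1 - α⁻¹) • Ψ := by
    rw [Matrix.mul_smul, Matrix.smul_mul]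
    module
  have h := PosSemidef.inv_sub_inv (hS.smul (inv_pos.2 hα₀))
    (hgap ▸ hΨ.posSemidef.smul (sub_nonneg.2 (inv_le_one_of_one_le₀ hα)))
  rwa [inv_smul_of_ne_zero hS.isUnit (inv_ne_zero hα₀.ne'), inv_inv] at h

theorem PosDef.inv_add_mul_mul_transpose_sub_smul_inv {Ω : Matrix ι ι ℝ} (hΩ : Ω.PosDef)
    {P Q : Matrix κ κ ℝ} (hP : P.PosSemidef) (hQ : Q.PosSemidef) (H : Matrix ι κ ℝ) {α : ℝ}
    (hα : 1 < α) (hPQ : (α • P - Q).PosSemidef) :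
    ((Ω + H * Q * Hᵀ)⁻¹ - α⁻¹ • (Ω + H * P * Hᵀ)⁻¹).PosDef := by
  have hgap : α • (Ω + H * P * Hᵀ) - (Ω + H * Q * Hᵀ) = (α - 1) • Ω + H * (α • P - Q) * Hᵀ := by
    rw [Matrix.mul_sub, Matrix.sub_mul, Matrix.mul_smul, Matrix.smul_mul]
    module
  rw [← inv_smul_of_ne_zero (hΩ.add_mul_mul_transpose hP H).isUnit (one_pos.trans hα).ne']
  exact PosDef.inv_sub_inv (hΩ.add_mul_mul_transpose hQ H)
    (hgap ▸ (hΩ.smul (sub_pos.2 hα)).add_posSemidef (hPQ.mul_mul_conjTranspose_same H))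

end Matrix

/-- Strict subhomogeneity (inverse form): for F(X) = Aᵀ (Ω + H (Ψ + K X Kᵀ)⁻¹ Hᵀ)⁻¹ A
with A injective, X ≻ 0 and α > 1, one has F(α⁻¹ • X) ≻ α⁻¹ • F(X). -/
theorem gbp_update_strict_subhom_inv {n m p q : ℕ}
    (A : Matrix (Fin m) (Fin n) ℝ) (Ω : Matrix (Fin m) (Fin m) ℝ)
    (H : Matrix (Fin m) (Fin p) ℝ) (Ψ : Matrix (Fin p) (Fin p) ℝ)
    (K : Matrix (Fin p) (Fin q) ℝ)
    (hΩ : Ω.PosDef) (hΨ : Ψ.PosDef)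
    (hA : ∀ v : Fin n → ℝ, A.mulVec v = 0 → v = 0)
    (X : Matrix (Fin q) (Fin q) ℝ) (hX : X.PosDef)
    (α : ℝ) (hα : 1 < α) :
    ((Aᵀ * (Ω + H * (Ψ + K * (α⁻¹ • X) * Kᵀ)⁻¹ * Hᵀ)⁻¹ * A)
      - α⁻¹ • (Aᵀ * (Ω + H * (Ψ + K * X * Kᵀ)⁻¹ * Hᵀ)⁻¹ * A)).PosDef := by
  have hα₀ : 0 < α := one_pos.trans hα
  have hS₁ := hΨ.add_mul_mul_transpose hX.posSemidef K
  have hS₂ := hΨ.add_mul_mul_transpose (hX.posSemidef.smul (inv_pos.2 hα₀).le) K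
  have hM := hΩ.inv_add_mul_mul_transpose_sub_smul_inv hS₁.inv.posSemidef hS₂.inv.posSemidef H hα
    (hΨ.smul_inv_sub_inv_add_mul_smul_mul_transpose hX.posSemidef K hα.le)
  have hAinj : Function.Injective A.mulVec := (injective_iff_map_eq_zero A.mulVecLin).2 hA
  simpa only [conjTranspose_eq_transpose_of_trivial, Matrix.mul_sub, Matrix.sub_mul,
    Matrix.mul_smul, Matrix.smul_mul]
    using hM.conjTranspose_mul_mul_same hAinj
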